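/- Let f : ℝ^d → ℝ be convex, let p ∈ (1,2] with conjugate q, let η > 0, w₁ ∈ ℝ^d, T ≥ 1 an integer, and let λ_1,…,λ_T > 0 with Λ_T = Σ_{t=1}^T λ_t. For t = 1,…,T−1 define w_{t+1} as the unique minimizer over ℝ^d of w ↦ η·⟨Σ_{s=1}^{t} λ_s g_s, w⟩ + (1/2)‖w − w₁‖_p², where g_t is a subgradient of f at w_t, and set ŵ_T = (Σ_{t=1}^T λ_t w_t)/Λ_T. Then for every w ∈ ℝ^d, f(ŵ_T) − f(w) ≤ ‖w − w₁‖_p²/(2ηΛ_T) + η·(Σ_{t=1}^T λ_t²‖g_t‖_q²)/(2(p−1)Λ_T). -/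

import Mathlib

open RealInnerProductSpace

noncomputable section

/-- The `p`-norm `‖w‖_p = (Σ_i |w_i|^p)^{1/p}` on `ℝ^d`. -/
def pnorm {d : ℕ} (p : ℝ) (w : EuclideanSpace ℝ (Fin d)) : ℝ :=
  (∑ i, |w i| ^ p) ^ (1 / p)

/-- `g` is a subgradient of the convex function `f` at `w`. -/
def IsSubgradAt {d : ℕ} (f : EuclideanSpace ℝ (Fin d) → ℝ)
    (w g : EuclideanSpace ℝ (Fin d)) : Prop :=
  ∀ u, f w + ⟪g, u - w⟫ ≤ f u

-- aux1: for r ∈ (0,1], t ∈ [0,1]: 2*r*t ≤ (1+t)^r − (1−t)^r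
lemma aux1 {r : ℝ} (hr0 : 0 < r) (hr1 : r ≤ 1) {t : ℝ} (ht0 : 0 ≤ t) (ht1 : t ≤ 1) :
    2 * r * t ≤ (1 + t) ^ r - (1 - t) ^ r := by
  set F : ℝ → ℝ := fun t => (1 + t) ^ r - (1 - t) ^ r - 2 * r * t with hF
  have key : MonotoneOn F (Set.Icc 0 1) := by
    apply monotoneOn_of_hasDerivWithinAt_nonneg (f' := fun t =>
      r * (1 + t) ^ (r - 1) + r * (1 - t) ^ (r - 1) - 2 * r) (convex_Icc 0 1)
    · apply ContinuousOn.sub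
      apply ContinuousOn.sub
      · exact (continuous_const.add continuous_id).continuousOn.rpow_const
          (fun x _ => Or.inr hr0.le)
      · exact (continuous_const.sub continuous_id).continuousOn.rpow_const
          (fun x _ => Or.inr hr0.le)
      · exact (continuous_const.mul continuous_id).continuousOn
    · intro x hx
      rw [interior_Icc] at hx
      have h1 : (0:ℝ) < 1 + x := by linarith [hx.1]
      have h2 : (0:ℝ) < 1 - x := by linarith [hx.2]
      have d1 : HasDerivAt (fun y : ℝ => (1 + y) ^ r) (1 * r * (1 + x) ^ (r - 1)) x := by
        exact ((hasDerivAt_id x).const_add 1).rpow_const (Or.inl h1.ne')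
      have d2 : HasDerivAt (fun y : ℝ => (1 - y) ^ r) ((-1) * r * (1 - x) ^ (r - 1)) x := by
        exact ((hasDerivAt_id x).const_sub 1).rpow_const (Or.inl h2.ne')
      have d3 : HasDerivAt F (r * (1 + x) ^ (r - 1) + r * (1 - x) ^ (r - 1) - 2 * r) x := by
        have := (d1.sub d2).sub ((hasDerivAt_id x).const_mul (2 * r))
        exact this.congr_deriv (by ring)
      exact d3.hasDerivWithinAt
    · intro x hx
      rw [interior_Icc] at hx
      have h1 : (0:ℝ) < 1 + x := by linarith [hx.1]
      have h2 : (0:ℝ) < 1 - x := by linarith [hx.2]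
      set a := (1 + x) ^ (r - 1)
      set b := (1 - x) ^ (r - 1)
      have ha : 0 < a := Real.rpow_pos_of_pos h1 _
      have hb : 0 < b := Real.rpow_pos_of_pos h2 _
      have hab : 1 ≤ a * b := by
        have : a * b = ((1 + x) * (1 - x)) ^ (r - 1) := by
          rw [Real.mul_rpow h1.le h2.le]
        rw [this]
        apply Real.one_le_rpow_of_pos_of_le_one_of_nonpos
        · nlinarith [hx.1, hx.2]
        · nlinarith [hx.1, hx.2]
        · linarith
      have : 2 ≤ a + b := by nlinarith [sq_nonneg (a - b)]
      nlinarith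
  have h0 : F 0 = 0 := by simp [hF]
  have := key (Set.mem_Icc.mpr ⟨le_refl 0, zero_le_one⟩) (Set.mem_Icc.mpr ⟨ht0, ht1⟩) ht0
  rw [h0] at this
  simp only [hF] at this
  linarith

-- aux2: (1+t)^p + (1−t)^p ≥ 2 + p(p−1)t² for t ∈ [0,1], p ∈ (1,2]
lemma aux2 {p : ℝ} (hp1 : 1 < p) (hp2 : p ≤ 2) {t : ℝ} (ht0 : 0 ≤ t) (ht1 : t ≤ 1) :
    2 + p * (p - 1) * t ^ 2 ≤ (1 + t) ^ p + (1 - t) ^ p := by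
  set G : ℝ → ℝ := fun t => (1 + t) ^ p + (1 - t) ^ p - 2 - p * (p - 1) * t ^ 2 with hG
  have key : MonotoneOn G (Set.Icc 0 1) := by
    apply monotoneOn_of_hasDerivWithinAt_nonneg (f' := fun t =>
      p * (1 + t) ^ (p - 1) - p * (1 - t) ^ (p - 1) - 2 * (p * (p - 1)) * t) (convex_Icc 0 1)
    · apply ContinuousOn.sub
      apply ContinuousOn.sub
      apply ContinuousOn.add
      · exact (continuous_const.add continuous_id).continuousOn.rpow_const
          (fun x _ => Or.inr (by linarith))
      · exact (continuous_const.sub continuous_id).continuousOn.rpow_const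
          (fun x _ => Or.inr (by linarith))
      · exact continuousOn_const
      · exact (continuous_const.mul (continuous_pow 2)).continuousOn
    · intro x hx
      rw [interior_Icc] at hx
      have h1 : (0:ℝ) < 1 + x := by linarith [hx.1]
      have h2 : (0:ℝ) < 1 - x := by linarith [hx.2]
      have d1 : HasDerivAt (fun y : ℝ => (1 + y) ^ p) (1 * p * (1 + x) ^ (p - 1)) x :=
        ((hasDerivAt_id x).const_add 1).rpow_const (Or.inl h1.ne')
      have d2 : HasDerivAt (fun y : ℝ => (1 - y) ^ p) ((-1) * p * (1 - x) ^ (p - 1)) x :=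
        ((hasDerivAt_id x).const_sub 1).rpow_const (Or.inl h2.ne')
      have d4 : HasDerivAt (fun y : ℝ => p * (p - 1) * y ^ 2) (p * (p - 1) * (2 * x)) x := by
        have : HasDerivAt (fun y : ℝ => y ^ 2) (2 * x) x := by
          simpa using hasDerivAt_pow 2 x
        exact this.const_mul _
      have d3 : HasDerivAt G
          (p * (1 + x) ^ (p - 1) - p * (1 - x) ^ (p - 1) - 2 * (p * (p - 1)) * x) x := by
        have := ((d1.add d2).sub (hasDerivAt_const x 2)).sub d4
        exact this.congr_deriv (by ring)
      exact d3.hasDerivWithinAt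
    · intro x hx
      rw [interior_Icc] at hx
      have := aux1 (r := p - 1) (by linarith) (by linarith) hx.1.le hx.2.le
      nlinarith
  have h0 : G 0 = 0 := by simp [hG]; norm_num
  have := key (Set.mem_Icc.mpr ⟨le_refl 0, zero_le_one⟩) (Set.mem_Icc.mpr ⟨ht0, ht1⟩) ht0
  rw [h0] at this
  simp only [hG] at this
  linarith

lemma bcl_sorted {p : ℝ} (hp1 : 1 < p) (hp2 : p ≤ 2) {a b : ℝ} (hb : 0 ≤ b) (hba : b ≤ a) :
    a ^ 2 + (p - 1) * b ^ 2 ≤ ((|a + b| ^ p + |a - b| ^ p) / 2) ^ (2 / p) := by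
  have ha : 0 ≤ a := hb.trans hba
  rw [abs_of_nonneg (by linarith : (0:ℝ) ≤ a + b), abs_of_nonneg (by linarith : (0:ℝ) ≤ a - b)]
  rcases eq_or_lt_of_le ha with rfl | hapos
  · have hb0 : b = 0 := le_antisymm hba hb
    subst hb0
    norm_num
    rw [Real.zero_rpow (by positivity : p ≠ 0)]
    norm_num
    rw [Real.zero_rpow (by positivity : 2 / p ≠ 0)]
  · set t := b / a with htd
    have ht0 : 0 ≤ t := div_nonneg hb hapos.le
    have ht1 : t ≤ 1 := (div_le_one hapos).mpr hba
    have hbt : b = a * t := by rw [htd]; field_simp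
    -- scalar inequality in t
    have hX1 : (1:ℝ) ≤ 1 + (p - 1) * t ^ 2 := by nlinarith
    have hstep : (1 + (p - 1) * t ^ 2) ^ (p / 2) ≤ ((1 + t) ^ p + (1 - t) ^ p) / 2 := by
      have hber := rpow_one_add_le_one_add_mul_self
        (s := (p - 1) * t ^ 2) (by nlinarith) (by linarith : (0:ℝ) ≤ p / 2) (by linarith)
      have := aux2 hp1 hp2 ht0 ht1
      calc (1 + (p - 1) * t ^ 2) ^ (p / 2) ≤ 1 + p / 2 * ((p - 1) * t ^ 2) := hber
        _ = (2 + p * (p - 1) * t ^ 2) / 2 := by ring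
        _ ≤ ((1 + t) ^ p + (1 - t) ^ p) / 2 := by linarith
    have hkey : 1 + (p - 1) * t ^ 2 ≤ (((1 + t) ^ p + (1 - t) ^ p) / 2) ^ (2 / p) := by
      have h1 : ((1 + (p - 1) * t ^ 2) ^ (p / 2)) ^ (2 / p) ≤
          (((1 + t) ^ p + (1 - t) ^ p) / 2) ^ (2 / p) :=
        Real.rpow_le_rpow (Real.rpow_nonneg (by linarith) _) hstep (by positivity)
      rwa [← Real.rpow_mul (by linarith : (0:ℝ) ≤ 1 + (p - 1) * t ^ 2),
        show p / 2 * (2 / p) = 1 by field_simp, Real.rpow_one] at h1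
    -- scale by a
    have hsc : ((a * (1 + t)) ^ p + (a * (1 - t)) ^ p) / 2 =
        a ^ p * (((1 + t) ^ p + (1 - t) ^ p) / 2) := by
      rw [Real.mul_rpow hapos.le (by linarith), Real.mul_rpow hapos.le (by linarith)]
      ring
    have hgoal : a + b = a * (1 + t) := by rw [hbt]; ring
    have hgoal2 : a - b = a * (1 - t) := by rw [hbt]; ring
    have hY : (0:ℝ) ≤ ((1 + t) ^ p + (1 - t) ^ p) / 2 :=
      div_nonneg (add_nonneg (Real.rpow_nonneg (by linarith) _)
        (Real.rpow_nonneg (by linarith) _)) (by norm_num)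
    have heq : (a ^ p) ^ (2 / p) = a ^ (2:ℕ) := by
      rw [← Real.rpow_mul hapos.le, ← Real.rpow_natCast a 2]
      congr 1
      push_cast
      field_simp
    rw [hgoal, hgoal2, hsc, Real.mul_rpow (Real.rpow_nonneg hapos.le _) hY, heq]
    calc a ^ 2 + (p - 1) * b ^ 2 = a ^ 2 * (1 + (p - 1) * t ^ 2) := by rw [hbt]; ring
      _ ≤ a ^ 2 * (((1 + t) ^ p + (1 - t) ^ p) / 2) ^ (2 / p) := by
          apply mul_le_mul_of_nonneg_left hkey (by positivity)

lemma bcl_nonneg {p : ℝ} (hp1 : 1 < p) (hp2 : p ≤ 2) {a b : ℝ} (ha : 0 ≤ a) (hb : 0 ≤ b) :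
    a ^ 2 + (p - 1) * b ^ 2 ≤ ((|a + b| ^ p + |a - b| ^ p) / 2) ^ (2 / p) := by
  rcases le_total b a with h | h
  · exact bcl_sorted hp1 hp2 hb h
  · have := bcl_sorted hp1 hp2 ha h
    rw [show b + a = a + b by ring, abs_sub_comm b a] at this
    have h2 : a ^ 2 ≤ b ^ 2 := by nlinarith
    nlinarith

lemma bcl_scalar {p : ℝ} (hp1 : 1 < p) (hp2 : p ≤ 2) (a b : ℝ) :
    a ^ 2 + (p - 1) * b ^ 2 ≤ ((|a + b| ^ p + |a - b| ^ p) / 2) ^ (2 / p) := by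
  rcases le_total 0 a with ha | ha <;> rcases le_total 0 b with hb | hb
  · exact bcl_nonneg hp1 hp2 ha hb
  · have := bcl_nonneg hp1 hp2 ha (neg_nonneg.mpr hb)
    rw [show a + -b = a - b by ring, show a - -b = a + b by ring, neg_sq,
      add_comm (|a - b| ^ p)] at this
    exact this
  · have := bcl_nonneg hp1 hp2 (neg_nonneg.mpr ha) hb
    rw [show -a + b = -(a - b) by ring, show -a - b = -(a + b) by ring, abs_neg, abs_neg,
      neg_sq, add_comm (|a - b| ^ p)] at this
    exact this
  · have := bcl_nonneg hp1 hp2 (neg_nonneg.mpr ha) (neg_nonneg.mpr hb)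
    rw [show -a + -b = -(a + b) by ring, show -a - -b = -(a - b) by ring, abs_neg, abs_neg,
      neg_sq, neg_sq] at this
    exact this

lemma superadd {d : ℕ} {r : ℝ} (hr0 : 0 < r) (hr1 : r ≤ 1) (u v : Fin d → ℝ)
    (hu : ∀ i, 0 ≤ u i) (hv : ∀ i, 0 ≤ v i) :
    (∑ i, u i ^ r) ^ (1 / r) + (∑ i, v i ^ r) ^ (1 / r) ≤
      (∑ i, (u i + v i) ^ r) ^ (1 / r) := by
  rcases eq_or_lt_of_le hr1 with rfl | hr1
  · simp only [Real.rpow_one, one_div, inv_one, ← Finset.sum_add_distrib]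
    exact le_refl _
  set w : Fin d → ℝ := fun i => u i + v i with hw
  have hwn : ∀ i, 0 ≤ w i := fun i => add_nonneg (hu i) (hv i)
  set S : ℝ := ∑ i, w i ^ r with hSdef
  have hSn : 0 ≤ S := Finset.sum_nonneg fun i _ => Real.rpow_nonneg (hwn i) _
  rcases eq_or_lt_of_le hSn with hS0 | hSpos
  · -- S = 0, so all w i = 0, hence u = v = 0
    have hall : ∀ i, w i = 0 := by
      intro i
      have := (Finset.sum_eq_zero_iff_of_nonneg
        (fun j _ => Real.rpow_nonneg (hwn j) r)).mp hS0.symm i (Finset.mem_univ i)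
      have h2 := Real.rpow_eq_zero (hwn i) hr0.ne' |>.mp this
      exact h2
    have hu0 : ∀ i, u i = 0 := by
      intro i
      have h := hall i
      simp only [hw] at h
      linarith [hv i, hu i]
    have hv0 : ∀ i, v i = 0 := by
      intro i
      have h := hall i
      simp only [hw] at h
      linarith [hu0 i, hv i]
    have hsum0 : ∀ (x : Fin d → ℝ), (∀ i, x i = 0) → (∑ i, x i ^ r) ^ (1/r) = (0:ℝ) := by
      intro x hx
      rw [Finset.sum_eq_zero (fun i _ => by rw [hx i, Real.zero_rpow hr0.ne']),
        Real.zero_rpow (by positivity : (1:ℝ)/r ≠ 0)]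
    rw [hsum0 u hu0, hsum0 v hv0, ← hS0, Real.zero_rpow (by positivity : (1:ℝ)/r ≠ 0)]
    norm_num
  -- main case
  have hconj : Real.HolderConjugate (1 / r) (1 / (1 - r)) := by
    rw [Real.holderConjugate_iff]; constructor
    · rw [lt_div_iff₀ hr0]; linarith
    · rw [one_div, one_div, inv_inv, inv_inv]; ring
  have key : ∀ (x : Fin d → ℝ), (∀ i, 0 ≤ x i) → (∀ i, x i ≤ w i) →
      (∑ i, x i ^ r) ^ (1 / r) ≤ (∑ i, x i * w i ^ (r - 1)) * S ^ ((1 - r) / r) := by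
    intro x hx hxw
    have hT : 0 ≤ ∑ i, x i * w i ^ (r - 1) :=
      Finset.sum_nonneg fun i _ => mul_nonneg (hx i) (Real.rpow_nonneg (hwn i) _)
    have hstep : ∑ i, x i ^ r ≤ (∑ i, x i * w i ^ (r - 1)) ^ r * S ^ (1 - r) := by
      have hold := Real.inner_le_Lp_mul_Lq (s := Finset.univ)
        (f := fun i => (x i * w i ^ (r - 1)) ^ r) (g := fun i => (w i ^ r) ^ (1 - r)) hconj
      have e1 : ∀ i : Fin d, (x i * w i ^ (r - 1)) ^ r * (w i ^ r) ^ (1 - r) = x i ^ r := by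
        intro i
        rcases eq_or_lt_of_le (hwn i) with hwi | hwi
        · have hxi : x i = 0 := le_antisymm (le_of_le_of_eq (hxw i) hwi.symm) (hx i)
          rw [hxi, ← hwi, Real.zero_rpow (show r - 1 ≠ 0 by linarith), mul_zero,
            Real.zero_rpow hr0.ne', zero_mul]
        · rw [Real.mul_rpow (hx i) (Real.rpow_nonneg (hwn i) _),
            ← Real.rpow_mul (hwn i) (r - 1) r, ← Real.rpow_mul (hwn i) r (1 - r),
            mul_assoc, ← Real.rpow_add hwi, show (r - 1) * r + r * (1 - r) = 0 by ring,
            Real.rpow_zero, mul_one]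
      have e2 : ∀ i : Fin d, |(x i * w i ^ (r - 1)) ^ r| ^ (1 / r) = x i * w i ^ (r - 1) := by
        intro i
        have hn : 0 ≤ x i * w i ^ (r - 1) := mul_nonneg (hx i) (Real.rpow_nonneg (hwn i) _)
        rw [abs_of_nonneg (Real.rpow_nonneg hn _), ← Real.rpow_mul hn,
          mul_one_div, div_self hr0.ne', Real.rpow_one]
      have e3 : ∀ i : Fin d, |(w i ^ r) ^ (1 - r)| ^ (1 / (1 - r)) = w i ^ r := by
        intro i
        have hn : 0 ≤ w i ^ r := Real.rpow_nonneg (hwn i) _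
        rw [abs_of_nonneg (Real.rpow_nonneg hn _), ← Real.rpow_mul hn,
          mul_one_div, div_self (by linarith : 1 - r ≠ 0), Real.rpow_one]
      simp only [e2, e3] at hold
      calc ∑ i, x i ^ r = ∑ i, (x i * w i ^ (r - 1)) ^ r * (w i ^ r) ^ (1 - r) := by
            rw [Finset.sum_congr rfl fun i _ => (e1 i)]
        _ ≤ (∑ i, x i * w i ^ (r - 1)) ^ (1 / (1 / r)) * (∑ i, w i ^ r) ^ (1 / (1 / (1 - r))) :=
            hold
        _ = (∑ i, x i * w i ^ (r - 1)) ^ r * S ^ (1 - r) := by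
            rw [one_div_one_div, one_div_one_div]
      -- done
    have h2 : (∑ i, x i ^ r) ^ (1 / r) ≤
        ((∑ i, x i * w i ^ (r - 1)) ^ r * S ^ (1 - r)) ^ (1 / r) :=
      Real.rpow_le_rpow (Finset.sum_nonneg fun i _ => Real.rpow_nonneg (hx i) _) hstep
        (by positivity)
    rw [Real.mul_rpow (Real.rpow_nonneg hT _) (Real.rpow_nonneg hSn _),
      ← Real.rpow_mul hT, ← Real.rpow_mul hSn, mul_one_div, div_self hr0.ne',
      Real.rpow_one, mul_one_div] at h2
    exact h2
  have hU := key u hu (fun i => by simp only [hw]; linarith [hv i])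
  have hV := key v hv (fun i => by simp only [hw]; linarith [hu i])
  have hsum : (∑ i, u i * w i ^ (r - 1)) + (∑ i, v i * w i ^ (r - 1)) = S := by
    rw [← Finset.sum_add_distrib, hSdef]
    apply Finset.sum_congr rfl
    intro i _
    rcases eq_or_lt_of_le (hwn i) with hwi | hwi
    · rw [← hwi, Real.zero_rpow (by linarith : r - 1 ≠ 0), Real.zero_rpow hr0.ne']
      have : u i = 0 := le_antisymm (by simp only [hw] at hwi; linarith [hv i]) (hu i)
      have hv0 : v i = 0 := by simp only [hw] at hwi; linarith [this]
      rw [this, hv0]; ring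
    · rw [← add_mul, show u i + v i = w i from rfl, ← Real.rpow_one_add' (hwn i) (by
        linarith : 1 + (r - 1) ≠ 0)]
      norm_num
  calc (∑ i, u i ^ r) ^ (1/r) + (∑ i, v i ^ r) ^ (1/r)
      ≤ ((∑ i, u i * w i ^ (r - 1)) + (∑ i, v i * w i ^ (r - 1))) * S ^ ((1 - r) / r) := by
        rw [add_mul]; exact add_le_add hU hV
    _ = S * S ^ ((1 - r) / r) := by rw [hsum]
    _ = S ^ (1/r) := by
        nth_rewrite 1 [← Real.rpow_one S]
        rw [← Real.rpow_add hSpos]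
        congr 1
        field_simp
        ring

lemma pnorm_sq {d : ℕ} {p : ℝ} (hp0 : 0 < p) (z : EuclideanSpace ℝ (Fin d)) :
    pnorm p z ^ 2 = (∑ i, |z i| ^ p) ^ (2 / p) := by
  unfold pnorm
  rw [← Real.rpow_natCast ((∑ i, |z i| ^ p) ^ (1 / p)) 2,
    ← Real.rpow_mul (Finset.sum_nonneg fun i _ => Real.rpow_nonneg (abs_nonneg _) _)]
  congr 1
  push_cast
  field_simp

lemma midpoint_rpow {s X Y : ℝ} (hs : 1 ≤ s) (hX : 0 ≤ X) (hY : 0 ≤ Y) :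
    ((X + Y) / 2) ^ s ≤ (X ^ s + Y ^ s) / 2 := by
  have := (convexOn_rpow hs).2 (Set.mem_Ici.mpr hX) (Set.mem_Ici.mpr hY)
    (by norm_num : (0:ℝ) ≤ 1/2) (by norm_num : (0:ℝ) ≤ 1/2) (by norm_num)
  simp only [smul_eq_mul] at this
  calc ((X + Y) / 2) ^ s = (1/2 * X + 1/2 * Y) ^ s := by ring_nf
    _ ≤ 1/2 * X ^ s + 1/2 * Y ^ s := this
    _ = (X ^ s + Y ^ s) / 2 := by ring

lemma bcl_vec {d : ℕ} {p : ℝ} (hp1 : 1 < p) (hp2 : p ≤ 2)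
    (x y : EuclideanSpace ℝ (Fin d)) :
    pnorm p ((1/2 : ℝ) • (x + y)) ^ 2 + (p - 1) * pnorm p ((1/2 : ℝ) • (x - y)) ^ 2
      ≤ (pnorm p x ^ 2 + pnorm p y ^ 2) / 2 := by
  have hp0 : (0:ℝ) < p := by linarith
  have hr0 : (0:ℝ) < p / 2 := by linarith
  have hr1 : p / 2 ≤ 1 := by linarith
  set A : EuclideanSpace ℝ (Fin d) := (1/2 : ℝ) • (x + y) with hA
  set B : EuclideanSpace ℝ (Fin d) := (1/2 : ℝ) • (x - y) with hB
  have hAB1 : ∀ i, A i + B i = x i := by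
    intro i
    simp only [hA, hB, PiLp.smul_apply, PiLp.add_apply, PiLp.sub_apply, smul_eq_mul]
    ring
  have hAB2 : ∀ i, A i - B i = y i := by
    intro i
    simp only [hA, hB, PiLp.smul_apply, PiLp.add_apply, PiLp.sub_apply, smul_eq_mul]
    ring
  set u : Fin d → ℝ := fun i => (A i) ^ 2 with hu
  set v : Fin d → ℝ := fun i => (p - 1) * (B i) ^ 2 with hv
  have hun : ∀ i, 0 ≤ u i := fun i => sq_nonneg _
  have hvn : ∀ i, 0 ≤ v i := fun i => mul_nonneg (by linarith) (sq_nonneg _)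
  have hsq_rpow : ∀ (c : ℝ), (c ^ 2 : ℝ) ^ (p/2) = |c| ^ p := by
    intro c
    rw [← sq_abs, ← Real.rpow_natCast |c| 2, ← Real.rpow_mul (abs_nonneg c)]
    norm_num
    rw [show (2:ℝ) * (p/2) = p by ring]
  have hu_r : ∀ i, u i ^ (p/2) = |A i| ^ p := fun i => hsq_rpow (A i)
  have hv_r : ∀ i, v i ^ (p/2) = (p - 1) ^ (p/2) * |B i| ^ p := by
    intro i
    rw [hv, Real.mul_rpow (by linarith) (sq_nonneg _), hsq_rpow (B i)]
  have hsuper := superadd hr0 hr1 u v hun hvn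
  -- identify the three pieces
  have e1 : (∑ i, u i ^ (p/2)) ^ (1 / (p/2)) = pnorm p A ^ 2 := by
    rw [pnorm_sq hp0, Finset.sum_congr rfl fun i _ => hu_r i]
    congr 1
    field_simp
  have e2 : (∑ i, v i ^ (p/2)) ^ (1 / (p/2)) = (p - 1) * pnorm p B ^ 2 := by
    rw [Finset.sum_congr rfl fun i _ => hv_r i, ← Finset.mul_sum,
      Real.mul_rpow (Real.rpow_nonneg (by linarith) _)
        (Finset.sum_nonneg fun i _ => Real.rpow_nonneg (abs_nonneg _) _),
      ← Real.rpow_mul (by linarith : (0:ℝ) ≤ p - 1),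
      show p/2 * (1 / (p/2)) = 1 by field_simp, Real.rpow_one, pnorm_sq hp0]
    congr 1
    field_simp
  have e3 : (∑ i, (u i + v i) ^ (p/2)) ^ (1 / (p/2)) ≤
      (pnorm p x ^ 2 + pnorm p y ^ 2) / 2 := by
    rw [show (1 : ℝ) / (p/2) = 2/p by field_simp]
    have hpt : ∀ i, (u i + v i) ^ (p/2) ≤ (|x i| ^ p + |y i| ^ p) / 2 := by
      intro i
      have hb := bcl_scalar hp1 hp2 (A i) (B i)
      rw [hAB1 i, hAB2 i] at hb
      have h2 : (u i + v i) ^ (p/2) ≤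
          (((|x i| ^ p + |y i| ^ p) / 2) ^ (2/p)) ^ (p/2) :=
        Real.rpow_le_rpow (add_nonneg (hun i) (hvn i)) hb hr0.le
      rwa [← Real.rpow_mul (by positivity), show 2/p * (p/2) = 1 by field_simp,
        Real.rpow_one] at h2
    have hsum : ∑ i, (u i + v i) ^ (p/2) ≤
        ((∑ i, |x i| ^ p) + (∑ i, |y i| ^ p)) / 2 := by
      calc ∑ i, (u i + v i) ^ (p/2) ≤ ∑ i, (|x i| ^ p + |y i| ^ p) / 2 :=
            Finset.sum_le_sum fun i _ => hpt i
        _ = ((∑ i, |x i| ^ p) + (∑ i, |y i| ^ p)) / 2 := by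
            rw [← Finset.sum_div, Finset.sum_add_distrib]
    have hmono : (∑ i, (u i + v i) ^ (p/2)) ^ (1 / (p/2)) ≤
        ((((∑ i, |x i| ^ p) + (∑ i, |y i| ^ p)) / 2)) ^ (1 / (p/2)) :=
      Real.rpow_le_rpow (Finset.sum_nonneg fun i _ =>
        Real.rpow_nonneg (add_nonneg (hun i) (hvn i)) _) hsum (by positivity)
    have hconv := midpoint_rpow (s := 2/p) (X := ∑ i : Fin d, |x i| ^ p)
      (Y := ∑ i : Fin d, |y i| ^ p)
      (by rw [le_div_iff₀ hp0]; linarith : (1:ℝ) ≤ 2/p)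
      (Finset.sum_nonneg fun (i : Fin d) _ => Real.rpow_nonneg (abs_nonneg (x i)) p)
      (Finset.sum_nonneg fun (i : Fin d) _ => Real.rpow_nonneg (abs_nonneg (y i)) p)
    rw [show (1 : ℝ) / (p/2) = 2/p by field_simp] at hmono
    calc (∑ i, (u i + v i) ^ (p/2)) ^ (2 / p)
        ≤ ((((∑ i, |x i| ^ p) + (∑ i, |y i| ^ p)) / 2)) ^ (2/p) := hmono
      _ ≤ ((∑ i, |x i| ^ p) ^ (2/p) + (∑ i, |y i| ^ p) ^ (2/p)) / 2 := hconv
      _ = (pnorm p x ^ 2 + pnorm p y ^ 2) / 2 := by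
          rw [pnorm_sq hp0, pnorm_sq hp0]
  rw [show (1 : ℝ) / (p/2) = 2/p by field_simp] at hsuper e1 e2 e3
  rw [← e1, ← e2]
  exact le_trans hsuper e3

lemma pnorm_smul {d : ℕ} {p : ℝ} (hp : 0 < p) (c : ℝ) (x : EuclideanSpace ℝ (Fin d)) :
    pnorm p (c • x) = |c| * pnorm p x := by
  unfold pnorm
  have h1 : ∀ i : Fin d, |(c • x) i| ^ p = |c| ^ p * |x i| ^ p := by
    intro i
    have : (c • x) i = c * x i := rfl
    rw [this, abs_mul, Real.mul_rpow (abs_nonneg _) (abs_nonneg _)]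
  simp only [h1, ← Finset.mul_sum]
  rw [Real.mul_rpow (Real.rpow_nonneg (abs_nonneg _) _)
    (Finset.sum_nonneg fun i _ => Real.rpow_nonneg (abs_nonneg _) _),
    ← Real.rpow_mul (abs_nonneg _), mul_one_div, div_self hp.ne', Real.rpow_one]

lemma pnorm_neg {d : ℕ} (p : ℝ) (x : EuclideanSpace ℝ (Fin d)) : pnorm p (-x) = pnorm p x := by
  unfold pnorm
  congr 1
  apply Finset.sum_congr rfl
  intro i _
  have : (-x) i = -(x i) := rfl
  rw [this, abs_neg]

lemma pnorm_nonneg {d : ℕ} (p : ℝ) (w : EuclideanSpace ℝ (Fin d)) : 0 ≤ pnorm p w :=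
  Real.rpow_nonneg (Finset.sum_nonneg fun i _ => Real.rpow_nonneg (abs_nonneg _) _) _

lemma qg {d : ℕ} {p : ℝ} (hp1 : 1 < p) (hp2 : p ≤ 2)
    (V : EuclideanSpace ℝ (Fin d) → ℝ) (wstar : EuclideanSpace ℝ (Fin d))
    (hmin : ∀ u, V wstar ≤ V u)
    (hmid : ∀ x y : EuclideanSpace ℝ (Fin d),
      V ((1/2 : ℝ) • (x + y)) + ((p - 1)/2) * pnorm p ((1/2 : ℝ) • (x - y)) ^ 2
        ≤ (V x + V y) / 2)
    (u : EuclideanSpace ℝ (Fin d)) :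
    V wstar + ((p - 1)/2) * pnorm p (u - wstar) ^ 2 ≤ V u := by
  have hp0 : (0:ℝ) < p := by linarith
  set D : ℝ := pnorm p (u - wstar) with hD
  have hDn : 0 ≤ D := pnorm_nonneg _ _
  set x : ℕ → EuclideanSpace ℝ (Fin d) := fun n => wstar + ((1/2 : ℝ)^n) • (u - wstar) with hx
  have hx0 : x 0 = u := by simp [hx]
  set a : ℕ → ℝ := fun n => V (x n) - V wstar with ha
  have han : ∀ n, 0 ≤ a n := fun n => sub_nonneg.mpr (hmin (x n))
  clear_value D x a
  have hrec : ∀ n, a (n + 1) ≤ a n / 2 - ((p - 1)/2) * ((1/2:ℝ)^(n+1))^2 * D^2 := by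
    intro n
    have hmidn := hmid wstar (x n)
    have e1 : (1/2 : ℝ) • (wstar + x n) = x (n + 1) := by
      rw [hx]
      simp only [pow_succ]
      module
    have e2 : (1/2 : ℝ) • (wstar - x n) = -(((1/2:ℝ)^(n+1)) • (u - wstar)) := by
      rw [hx]
      simp only [pow_succ]
      module
    have e3 : pnorm p ((1/2 : ℝ) • (wstar - x n)) = ((1/2:ℝ)^(n+1)) * D := by
      rw [e2, pnorm_neg, pnorm_smul hp0, abs_of_pos (by positivity), hD]
    rw [e1, e3] at hmidn
    have heq : ((1/2:ℝ)^(n+1) * D)^2 = ((1/2:ℝ)^(n+1))^2 * D^2 := by ring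
    rw [heq] at hmidn
    rw [ha]
    simp only []
    linarith
  have claim : ∀ n : ℕ, (2:ℝ)^n * a n + ((p-1)/2) * D^2 * (1 - (1/2:ℝ)^n) ≤ a 0 := by
    intro n
    induction n with
    | zero => simp
    | succ n ih =>
      have hb1 : (2:ℝ)^n * (1/2:ℝ)^n = 1 := by
        rw [← mul_pow]; norm_num
      have hrecn := hrec n
      rw [pow_succ (1/2:ℝ) n] at hrecn
      rw [pow_succ (2:ℝ) n, pow_succ (1/2:ℝ) n]
      have hmul := mul_le_mul_of_nonneg_left hrecn
        (by positivity : (0:ℝ) ≤ (2:ℝ)^n * 2)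
      have hbs2 : (2:ℝ)^n * ((1/2:ℝ)^n)^2 * D^2 = (1/2:ℝ)^n * D^2 := by
        rw [pow_two, ← mul_assoc, hb1, one_mul]
      have hbs2p : p * ((2:ℝ)^n * ((1/2:ℝ)^n)^2 * D^2) = p * ((1/2:ℝ)^n * D^2) := by
        rw [hbs2]
      nlinarith [ih, hmul, hbs2, hbs2p, hDn]
  have hfin : ∀ n : ℕ, ((p-1)/2) * D^2 * (1 - (1/2:ℝ)^n) ≤ a 0 := by
    intro n
    have h1 := claim n
    have h2 : (0:ℝ) ≤ (2:ℝ)^n * a n := mul_nonneg (by positivity) (han n)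
    nlinarith [h1, h2]
  have hlim : Filter.Tendsto (fun n : ℕ => ((p-1)/2) * D^2 * (1 - (1/2:ℝ)^n))
      Filter.atTop (nhds (((p-1)/2) * D^2)) := by
    have h0 : Filter.Tendsto (fun n : ℕ => (1/2:ℝ)^n) Filter.atTop (nhds 0) :=
      tendsto_pow_atTop_nhds_zero_of_lt_one (by norm_num) (by norm_num)
    have := (tendsto_const_nhds (x := ((p-1)/2) * D^2)).mul
      ((tendsto_const_nhds (x := (1:ℝ))).sub h0)
    simpa using this
  have hfin2 := le_of_tendsto' hlim hfin
  simp only [ha, hx0] at hfin2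
  linarith

lemma holder {d : ℕ} {p q : ℝ} (hpq : Real.HolderConjugate q p)
    (g x : EuclideanSpace ℝ (Fin d)) : ⟪g, x⟫ ≤ pnorm q g * pnorm p x := by
  simp only [PiLp.inner_apply, RCLike.inner_apply, conj_trivial]
  simp only [mul_comm (x.ofLp _)]
  calc ∑ i, g i * x i ≤ (∑ i, |g i| ^ q) ^ (1/q) * (∑ i, |x i| ^ p) ^ (1/p) :=
        Real.inner_le_Lp_mul_Lq Finset.univ _ _ hpq
    _ = pnorm q g * pnorm p x := rfl

/-- convergence of the dual averaging method in the `p`-norm: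
`f(ŵ_T) − f(w) ≤ ‖w − w₁‖_p²/(2ηΛ_T) + η·(Σ_t λ_t²‖g_t‖_q²)/(2(p−1)Λ_T)`, where
`w_{t+1}` minimizes `u ↦ η⟨Σ_{s≤t} λ_s g_s, u⟩ + (1/2)‖u − w₁‖_p²` and
`ŵ_T = (Σ_t λ_t w_t)/Λ_T`. -/
theorem stmt_15 {d : ℕ} (p q : ℝ) (hp1 : 1 < p) (hp2 : p ≤ 2)
    (hpq : 1 / p + 1 / q = 1)
    (f : EuclideanSpace ℝ (Fin d) → ℝ) (hf : ConvexOn ℝ Set.univ f)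
    (η : ℝ) (hη : 0 < η) (T : ℕ) (hT : 1 ≤ T)
    (w g : ℕ → EuclideanSpace ℝ (Fin d)) (lam : ℕ → ℝ)
    (hlam : ∀ t ∈ Finset.Icc 1 T, 0 < lam t)
    (hsub : ∀ t ∈ Finset.Icc 1 T, IsSubgradAt f (w t) (g t))
    (hstep : ∀ t : ℕ, 1 ≤ t → t + 1 ≤ T →
      ∀ u : EuclideanSpace ℝ (Fin d),
        η * ⟪∑ s ∈ Finset.Icc 1 t, lam s • g s, w (t + 1)⟫
            + (1 / 2) * pnorm p (w (t + 1) - w 1) ^ 2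
          ≤ η * ⟪∑ s ∈ Finset.Icc 1 t, lam s • g s, u⟫
            + (1 / 2) * pnorm p (u - w 1) ^ 2) :
    ∀ v : EuclideanSpace ℝ (Fin d),
      f ((∑ t ∈ Finset.Icc 1 T, lam t)⁻¹ • ∑ t ∈ Finset.Icc 1 T, lam t • w t) - f v
        ≤ pnorm p (v - w 1) ^ 2 / (2 * η * ∑ t ∈ Finset.Icc 1 T, lam t)
          + η * (∑ t ∈ Finset.Icc 1 T, lam t ^ 2 * pnorm q (g t) ^ 2)
            / (2 * (p - 1) * ∑ t ∈ Finset.Icc 1 T, lam t) := by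
  intro v
  have hp0 : (0:ℝ) < p := by linarith
  have hpm1 : (0:ℝ) < p - 1 := by linarith
  -- conjugate exponent facts
  have hinvp_pos : 0 < 1 / p := by positivity
  have hinvp_lt : 1 / p < 1 := by rw [div_lt_one hp0]; linarith
  have hinvq_pos : 0 < 1 / q := by linarith
  have hq0 : 0 < q := by
    rcases lt_trichotomy q 0 with h | h | h
    · exfalso; have : 1 / q < 0 := by apply div_neg_of_pos_of_neg one_pos h
      linarith
    · exfalso; rw [h] at hinvq_pos; simp at hinvq_pos
    · exact h
  have hq1 : 1 < q := by
    have : 1 / q < 1 := by linarith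
    rwa [div_lt_one hq0] at this
  have hqc : Real.HolderConjugate q p := by
    rw [Real.holderConjugate_iff]; constructor
    · exact hq1
    · rw [inv_eq_one_div, inv_eq_one_div]; linarith
  -- Hölder
  have hhold : ∀ (G x : EuclideanSpace ℝ (Fin d)), ⟪G, x⟫ ≤ pnorm q G * pnorm p x :=
    fun G x => holder hqc G x
  -- Young-type step
  have young : ∀ (l : ℝ), 0 ≤ l → ∀ (G zz : EuclideanSpace ℝ (Fin d)),
      η * (l * ⟪G, zz⟫) ≤ (p - 1)/2 * pnorm p zz ^ 2
        + η^2 / (2*(p-1)) * (l^2 * pnorm q G ^ 2) := by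
    intro l hl G zz
    have hH := hhold G zz
    have hZ : 0 ≤ pnorm p zz := pnorm_nonneg _ _
    have hGq : 0 ≤ pnorm q G := pnorm_nonneg _ _
    have hm : η * (l * ⟪G, zz⟫) ≤ η * l * (pnorm q G * pnorm p zz) := by
      rw [← mul_assoc]
      exact mul_le_mul_of_nonneg_left hH (by positivity)
    have key : 2*(p-1)*(η * (l * ⟪G, zz⟫)) ≤
        (p-1)^2 * pnorm p zz ^ 2 + η^2 * (l^2 * pnorm q G ^ 2) := by
      nlinarith [hm, sq_nonneg ((p-1) * pnorm p zz - η * l * pnorm q G), hpm1]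
    have hrw : (p - 1)/2 * pnorm p zz ^ 2 + η^2 / (2*(p-1)) * (l^2 * pnorm q G ^ 2)
        = ((p-1)^2 * pnorm p zz ^ 2 + η^2 * (l^2 * pnorm q G ^ 2)) / (2*(p-1)) := by
      field_simp
    rw [hrw, le_div_iff₀ (by linarith)]
    linarith [key]
  -- midpoint strong convexity of ψ
  have hmidpsi : ∀ x y : EuclideanSpace ℝ (Fin d),
      (1/2) * pnorm p ((1/2 : ℝ) • (x + y) - w 1) ^ 2
          + ((p - 1)/2) * pnorm p ((1/2 : ℝ) • (x - y)) ^ 2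
        ≤ ((1/2) * pnorm p (x - w 1) ^ 2 + (1/2) * pnorm p (y - w 1) ^ 2) / 2 := by
    intro x y
    have hb := bcl_vec hp1 hp2 (x - w 1) (y - w 1)
    have e1 : (1/2:ℝ) • ((x - w 1) + (y - w 1)) = (1/2:ℝ) • (x + y) - w 1 := by module
    have e2 : (1/2:ℝ) • ((x - w 1) - (y - w 1)) = (1/2:ℝ) • (x - y) := by module
    rw [e1, e2] at hb
    linarith
  -- quadratic growth at iterates
  have hQG : ∀ t : ℕ, 1 ≤ t → t + 1 ≤ T → ∀ u : EuclideanSpace ℝ (Fin d),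
      (η * ⟪∑ s ∈ Finset.Icc 1 t, lam s • g s, w (t + 1)⟫
          + (1 / 2) * pnorm p (w (t + 1) - w 1) ^ 2)
        + ((p - 1)/2) * pnorm p (u - w (t+1)) ^ 2
      ≤ η * ⟪∑ s ∈ Finset.Icc 1 t, lam s • g s, u⟫
          + (1 / 2) * pnorm p (u - w 1) ^ 2 := by
    intro t h1 h2 u
    exact qg hp1 hp2
      (fun u => η * ⟪∑ s ∈ Finset.Icc 1 t, lam s • g s, u⟫
        + (1 / 2) * pnorm p (u - w 1) ^ 2)
      (w (t+1)) (hstep t h1 h2)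
      (by
        intro x y
        have hlin : ⟪∑ s ∈ Finset.Icc 1 t, lam s • g s, (1/2 : ℝ) • (x + y)⟫
            = (⟪∑ s ∈ Finset.Icc 1 t, lam s • g s, x⟫
              + ⟪∑ s ∈ Finset.Icc 1 t, lam s • g s, y⟫) / 2 := by
          rw [real_inner_smul_right, inner_add_right]
          ring
        have := hmidpsi x y
        rw [hlin]
        linarith) u
  -- the inductive claim
  have claim : ∀ t : ℕ, 1 ≤ t → t + 1 ≤ T →
      η * (∑ s ∈ Finset.Icc 1 t, lam s * ⟪g s, w s⟫) ≤
        (η * ⟪∑ s ∈ Finset.Icc 1 t, lam s • g s, w (t+1)⟫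
          + (1/2) * pnorm p (w (t+1) - w 1) ^ 2)
        + η^2 / (2*(p-1)) * ∑ s ∈ Finset.Icc 1 t, lam s^2 * pnorm q (g s) ^ 2 := by
    intro t
    induction t with
    | zero => omega
    | succ n ih =>
      intro h1 h2
      rcases Nat.eq_or_lt_of_le h1 with hn | hn
      · -- base case : n + 1 = 1, i.e. n = 0
        have hn0 : n = 0 := by omega
        subst hn0
        simp only [Finset.Icc_self, Finset.sum_singleton,
          show (0:ℕ)+1+1 = 2 from rfl, show (0:ℕ)+1 = 1 from rfl]
        have hy := young (lam 1) (hlam 1 (by simp [Finset.mem_Icc]; omega)).le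
          (g 1) (w 1 - w 2)
        have hin : ⟪g 1, w 1 - w 2⟫ = ⟪g 1, w 1⟫ - ⟪g 1, w 2⟫ := inner_sub_right _ _ _
        have hpn : pnorm p (w 1 - w 2) = pnorm p (w 2 - w 1) := by
          rw [show w 1 - w 2 = -(w 2 - w 1) by abel, pnorm_neg]
        have hsm : ⟪lam 1 • g 1, w 2⟫ = lam 1 * ⟪g 1, w 2⟫ :=
          real_inner_smul_left _ _ _
        rw [hsm]
        rw [hin, hpn] at hy
        have hsq : 0 ≤ pnorm p (w 2 - w 1) ^ 2 := sq_nonneg _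
        have hhalf : (p-1)/2 * pnorm p (w 2 - w 1) ^ 2
            ≤ 1/2 * pnorm p (w 2 - w 1) ^ 2 :=
          mul_le_mul_of_nonneg_right (by linarith only [hp2]) hsq
        linarith only [hy, hhalf]
      · -- inductive step : 1 ≤ n
        have hn1 : 1 ≤ n := by omega
        have hn2 : n + 1 ≤ T := by omega
        have hih := ih hn1 hn2
        have hqg := hQG n hn1 hn2 (w (n+2))
        have hy := young (lam (n+1)) (hlam (n+1) (by simp [Finset.mem_Icc]; omega)).le
          (g (n+1)) (w (n+1) - w (n+2))
        have hin : ⟪g (n+1), w (n+1) - w (n+2)⟫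
            = ⟪g (n+1), w (n+1)⟫ - ⟪g (n+1), w (n+2)⟫ := inner_sub_right _ _ _
        have hpn : pnorm p (w (n+1) - w (n+2)) = pnorm p (w (n+2) - w (n+1)) := by
          rw [show w (n+1) - w (n+2) = -(w (n+2) - w (n+1)) by abel, pnorm_neg]
        rw [hin, hpn] at hy
        -- sum splits
        have hsplit1 : ∑ s ∈ Finset.Icc 1 (n+1), lam s * ⟪g s, w s⟫
            = (∑ s ∈ Finset.Icc 1 n, lam s * ⟪g s, w s⟫)
              + lam (n+1) * ⟪g (n+1), w (n+1)⟫ :=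
          Finset.sum_Icc_succ_top (by omega) _
        have hsplit2 : ∑ s ∈ Finset.Icc 1 (n+1), lam s ^2 * pnorm q (g s) ^ 2
            = (∑ s ∈ Finset.Icc 1 n, lam s ^2 * pnorm q (g s) ^ 2)
              + lam (n+1)^2 * pnorm q (g (n+1)) ^ 2 :=
          Finset.sum_Icc_succ_top (by omega) _
        have hsplit3 : ∀ u : EuclideanSpace ℝ (Fin d),
            ⟪∑ s ∈ Finset.Icc 1 (n+1), lam s • g s, u⟫
              = ⟪∑ s ∈ Finset.Icc 1 n, lam s • g s, u⟫ + lam (n+1) * ⟪g (n+1), u⟫ := by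
          intro u
          rw [Finset.sum_Icc_succ_top (by omega : 1 ≤ n + 1), inner_add_left,
            real_inner_smul_left]
        rw [hsplit1, hsplit2, hsplit3 (w (n+1+1))]
        have hexp : (n:ℕ) + 1 + 1 = n + 2 := by omega
        rw [hexp]
        linarith only [hih, hqg, hy]
  -- regret bound
  have regret : η * (∑ s ∈ Finset.Icc 1 T, lam s * ⟪g s, w s - v⟫)
      ≤ (1/2) * pnorm p (v - w 1) ^ 2
        + η^2 / (2*(p-1)) * ∑ s ∈ Finset.Icc 1 T, lam s^2 * pnorm q (g s) ^ 2 := by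
    have hdiff : ∀ s : ℕ, lam s * ⟪g s, w s - v⟫
        = lam s * ⟪g s, w s⟫ - lam s * ⟪g s, v⟫ := by
      intro s
      rw [inner_sub_right]
      ring
    have hsum_diff : ∑ s ∈ Finset.Icc 1 T, lam s * ⟪g s, w s - v⟫
        = (∑ s ∈ Finset.Icc 1 T, lam s * ⟪g s, w s⟫)
          - ∑ s ∈ Finset.Icc 1 T, lam s * ⟪g s, v⟫ := by
      rw [← Finset.sum_sub_distrib]
      exact Finset.sum_congr rfl fun s _ => hdiff s
    have hzv : ∀ k : ℕ, ⟪∑ s ∈ Finset.Icc 1 k, lam s • g s, v⟫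
        = ∑ s ∈ Finset.Icc 1 k, lam s * ⟪g s, v⟫ := by
      intro k
      rw [sum_inner]
      exact Finset.sum_congr rfl fun s _ => real_inner_smul_left _ _ _
    obtain ⟨n, rfl⟩ : ∃ n, T = n + 1 := ⟨T - 1, by omega⟩
    rcases Nat.eq_zero_or_pos n with hn0 | hnpos
    · -- T = 1
      subst hn0
      simp only [Finset.Icc_self, Finset.sum_singleton]
      have hy := young (lam 1) (hlam 1 (by simp)).le (g 1) (w 1 - v)
      have hpn : pnorm p (w 1 - v) = pnorm p (v - w 1) := by
        rw [show w 1 - v = -(v - w 1) by abel, pnorm_neg]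
      rw [hpn] at hy
      have hsq : 0 ≤ pnorm p (v - w 1) ^ 2 := sq_nonneg _
      have hhalf : (p-1)/2 * pnorm p (v - w 1) ^ 2
          ≤ 1/2 * pnorm p (v - w 1) ^ 2 :=
        mul_le_mul_of_nonneg_right (by linarith only [hp2]) hsq
      linarith only [hy, hhalf]
    · -- T = n+1 ≥ 2
      have h1 : 1 ≤ n := hnpos
      have h2 : n + 1 ≤ n + 1 := le_refl _
      have hcl := claim n h1 h2
      have hqg := hQG n h1 h2 v
      have hy := young (lam (n+1)) (hlam (n+1) (by simp)).le
        (g (n+1)) (w (n+1) - v)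
      have hin : ⟪g (n+1), w (n+1) - v⟫
          = ⟪g (n+1), w (n+1)⟫ - ⟪g (n+1), v⟫ := inner_sub_right _ _ _
      have hpn : pnorm p (w (n+1) - v) = pnorm p (v - w (n+1)) := by
        rw [show w (n+1) - v = -(v - w (n+1)) by abel, pnorm_neg]
      rw [hin, hpn] at hy
      have hsplit1 : ∑ s ∈ Finset.Icc 1 (n+1), lam s * ⟪g s, w s⟫
          = (∑ s ∈ Finset.Icc 1 n, lam s * ⟪g s, w s⟫)
            + lam (n+1) * ⟪g (n+1), w (n+1)⟫ :=
        Finset.sum_Icc_succ_top (by omega) _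
      have hsplit2 : ∑ s ∈ Finset.Icc 1 (n+1), lam s ^2 * pnorm q (g s) ^ 2
          = (∑ s ∈ Finset.Icc 1 n, lam s ^2 * pnorm q (g s) ^ 2)
            + lam (n+1)^2 * pnorm q (g (n+1)) ^ 2 :=
        Finset.sum_Icc_succ_top (by omega) _
      have hsplitz : ∑ s ∈ Finset.Icc 1 (n+1), lam s * ⟪g s, v⟫
          = (∑ s ∈ Finset.Icc 1 n, lam s * ⟪g s, v⟫) + lam (n+1) * ⟪g (n+1), v⟫ :=
        Finset.sum_Icc_succ_top (by omega) _
      rw [hsum_diff, hsplit1, hsplit2, hsplitz, ← hzv n]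
      have hsq : 0 ≤ pnorm p (v - w (n+1)) ^ 2 := sq_nonneg _
      linarith only [hcl, hqg, hy, hsq, hpm1, hη]
  -- subgradient inequality, weighted
  have hsg : ∀ s ∈ Finset.Icc 1 T, lam s * (f (w s) - f v) ≤ lam s * ⟪g s, w s - v⟫ := by
    intro s hs
    have := hsub s hs v
    have hin : ⟪g s, v - w s⟫ = -⟪g s, w s - v⟫ := by
      rw [show v - w s = -(w s - v) by abel, inner_neg_right]
    rw [hin] at this
    exact mul_le_mul_of_nonneg_left (by linarith) (hlam s hs).le
  have hsum_sg : ∑ s ∈ Finset.Icc 1 T, lam s * (f (w s) - f v)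
      ≤ ∑ s ∈ Finset.Icc 1 T, lam s * ⟪g s, w s - v⟫ :=
    Finset.sum_le_sum hsg
  -- positivity of Λ
  have hΛ : 0 < ∑ t ∈ Finset.Icc 1 T, lam t :=
    Finset.sum_pos hlam (Finset.nonempty_Icc.mpr hT)
  -- Jensen
  have hjen : f ((∑ t ∈ Finset.Icc 1 T, lam t)⁻¹ • ∑ t ∈ Finset.Icc 1 T, lam t • w t)
      ≤ (∑ t ∈ Finset.Icc 1 T, lam t)⁻¹ * ∑ t ∈ Finset.Icc 1 T, lam t * f (w t) := by
    have hcm := hf.map_centerMass_le (t := Finset.Icc 1 T) (w := lam) (p := w)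
      (fun i hi => (hlam i hi).le) hΛ (fun i _ => Set.mem_univ _)
    rw [Finset.centerMass] at hcm
    exact hcm.trans_eq (by simp [Finset.centerMass])
  -- final arithmetic
  have hreg2 : ∑ s ∈ Finset.Icc 1 T, lam s * (f (w s) - f v)
      ≤ ((1/2) * pnorm p (v - w 1) ^ 2
        + η^2 / (2*(p-1)) * ∑ s ∈ Finset.Icc 1 T, lam s^2 * pnorm q (g s) ^ 2) / η := by
    rw [le_div_iff₀ hη]
    calc (∑ s ∈ Finset.Icc 1 T, lam s * (f (w s) - f v)) * η
        = η * ∑ s ∈ Finset.Icc 1 T, lam s * (f (w s) - f v) := by ring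
      _ ≤ η * ∑ s ∈ Finset.Icc 1 T, lam s * ⟪g s, w s - v⟫ :=
          mul_le_mul_of_nonneg_left hsum_sg hη.le
      _ ≤ _ := regret
  have hexpand : ∑ s ∈ Finset.Icc 1 T, lam s * (f (w s) - f v)
      = (∑ s ∈ Finset.Icc 1 T, lam s * f (w s))
        - (∑ t ∈ Finset.Icc 1 T, lam t) * f v := by
    rw [Finset.sum_mul, ← Finset.sum_sub_distrib]
    apply Finset.sum_congr rfl
    intro s _
    ring
  set Λ : ℝ := ∑ t ∈ Finset.Icc 1 T, lam t with hΛdef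
  calc f (Λ⁻¹ • ∑ t ∈ Finset.Icc 1 T, lam t • w t) - f v
      ≤ Λ⁻¹ * (∑ t ∈ Finset.Icc 1 T, lam t * f (w t)) - f v := by linarith [hjen]
    _ = Λ⁻¹ * ((∑ t ∈ Finset.Icc 1 T, lam t * f (w t)) - Λ * f v) := by
        field_simp
    _ ≤ Λ⁻¹ * (((1/2) * pnorm p (v - w 1) ^ 2
        + η^2 / (2*(p-1)) * ∑ s ∈ Finset.Icc 1 T, lam s^2 * pnorm q (g s) ^ 2) / η) := by
        apply mul_le_mul_of_nonneg_left _ (by positivity)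
        rw [← hexpand]
        exact hreg2
    _ = pnorm p (v - w 1) ^ 2 / (2 * η * Λ)
        + η * (∑ t ∈ Finset.Icc 1 T, lam t ^ 2 * pnorm q (g t) ^ 2) / (2 * (p - 1) * Λ) := by
        field_simp
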